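/- Let ρ ∈ (0,1), k ≥ 1, ν_0 ∈ ℝ and ν ∈ ℝ^k, and let G(ν_0, ν) = (1/√ρ) ∫_{−∞}^{∞} φ((t − ν_0)/√ρ) ∏_{j=1}^{k} Φ((t − ν_j)/√(1−ρ)) dt. For i ∈ {1,…,k} define H_i(t, ν) = (Φ((t−ν_i)/√(1−ρ))/φ((t−ν_i)/√(1−ρ))) · (d/dt ∏_{j=1}^{k} Φ((t−ν_j)/√(1−ρ))) / (∏_{j=1}^{k} Φ((t−ν_j)/√(1−ρ))). Then (∂²G/∂ν_0∂ν_i)·(∂G/∂ν_0) − (∂²G/∂ν_0²)·(∂G/∂ν_i), evaluated at (ν_0, ν), equals (1/(2ρ²√(1−ρ))) ∫_{−∞}^{∞}∫_{−∞}^{∞} φ((s−ν_0)/√ρ) φ((t−ν_0)/√ρ) φ((s−ν_i)/√(1−ρ)) φ((t−ν_i)/√(1−ρ)) ∏_{j≠i} Φ((s−ν_j)/√(1−ρ)) ∏_{j≠i} Φ((t−ν_j)/√(1−ρ)) · (s−t)(H_i(s, ν) − H_i(t, ν)) ds dt. -/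

import Mathlib

open MeasureTheory ProbabilityTheory Filter
open scoped ENNReal

/-- The standard normal cumulative distribution function `Φ`. -/
noncomputable def Phi (x : ℝ) : ℝ := ((gaussianReal 0 1) (Set.Iic x)).toReal

/-- The standard normal probability density function `φ`. -/
noncomputable def phiPDF (x : ℝ) : ℝ := gaussianPDFReal 0 1 x

/-- The joint law of `n` independent standard normal random variables. -/
noncomputable def stdGaussianPi (n : ℕ) : Measure (Fin n → ℝ) :=
  Measure.pi fun _ => gaussianReal 0 1

/-- The intraclass-correlation multivariate Gaussian vector `X ~ N(μ, Σ)` with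
`Σ_{ij} = ρ + (1-ρ)δ_{ij}`, realized as `X_i = μ_i + √ρ Y_0 + √(1-ρ) Y_i` where
`Y_0, …, Y_k` are independent standard normals (the coordinates of `ω`). -/
noncomputable def Xvec (ρ : ℝ) {k : ℕ} (μ : Fin k → ℝ) (i : Fin k) (ω : Fin (k+1) → ℝ) : ℝ :=
  μ i + Real.sqrt ρ * ω 0 + Real.sqrt (1-ρ) * ω i.succ

/-- The cumulative distribution function of `X* = max {X_1, …, X_k}`. -/
noncomputable def Fstar (ρ : ℝ) {k : ℕ} (μ : Fin k → ℝ) (x : ℝ) : ℝ :=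
  (stdGaussianPi (k+1) {ω | (⨆ i, Xvec ρ μ i ω) ≤ x}).toReal

/-- `G(ν₀, ν) = (1/√ρ) ∫ φ((t-ν₀)/√ρ) ∏_j Φ((t-ν_j)/√(1-ρ)) dt`. -/
noncomputable def Gint (ρ : ℝ) {k : ℕ} (ν0 : ℝ) (ν : Fin k → ℝ) : ℝ :=
  (1 / Real.sqrt ρ) *
    ∫ t : ℝ, phiPDF ((t - ν0) / Real.sqrt ρ) * ∏ j, Phi ((t - ν j) / Real.sqrt (1-ρ))

/-- The partial derivative `∂G/∂ν₀(ν₀, ν)`. -/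
noncomputable def dG0 (ρ : ℝ) {k : ℕ} (ν : Fin k → ℝ) (ν0 : ℝ) : ℝ :=
  deriv (fun v => Gint ρ v ν) ν0

/-- The partial derivative `∂G/∂ν_i(ν₀, ν)`. -/
noncomputable def dGi (ρ : ℝ) {k : ℕ} (i : Fin k) (ν : Fin k → ℝ) (ν0 : ℝ) : ℝ :=
  deriv (fun v => Gint ρ ν0 (Function.update ν i v)) (ν i)

/-- `Δ_i = ∂²G/∂ν₀∂ν_i · ∂G/∂ν₀ - ∂²G/∂ν₀² · ∂G/∂ν_i` evaluated at `(ν₀, ν)`. -/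
noncomputable def Delta (ρ : ℝ) {k : ℕ} (i : Fin k) (ν : Fin k → ℝ) (ν0 : ℝ) : ℝ :=
  deriv (fun v0 => dGi ρ i ν v0) ν0 * dG0 ρ ν ν0 -
    deriv (fun v0 => dG0 ρ ν v0) ν0 * dGi ρ i ν ν0

/-- `H_i(t, ν)`. -/
noncomputable def Hfun (ρ : ℝ) {k : ℕ} (i : Fin k) (ν : Fin k → ℝ) (t : ℝ) : ℝ :=
  (Phi ((t - ν i) / Real.sqrt (1-ρ)) / phiPDF ((t - ν i) / Real.sqrt (1-ρ))) *
    deriv (fun s => ∏ j, Phi ((s - ν j) / Real.sqrt (1-ρ))) t /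
    ∏ j, Phi ((t - ν j) / Real.sqrt (1-ρ))

/-!
Write `a = √ρ`, `b = √(1-ρ)`, `P(t) = ∏_j Φ((t-ν_j)/b)` and `φ₀(t) = φ((t-ν₀)/a)`. Moving the
shift `ν₀` from the kernel onto `P` gives `∂G/∂ν₀ = (1/a) ∫ φ₀ P'`, while differentiating the single
factor `Φ((t-ν_i)/b)` gives `∂G/∂ν_i = -(1/(ab)) ∫ φ₀ q̃` with `q̃ = φ((t-ν_i)/b) ∏_{j≠i} Φ((t-ν_j)/b)`.
Differentiating the Gaussian kernel `φ₀` in `ν₀` brings down `(t-ν₀)/a²`, so with `p = φ₀ P'`,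
`q = φ₀ q̃` we get `Δ_i = (M₁p M₀q - M₁q M₀p)/(a⁴ b)`, where `M₀ f = ∫ f` and
`M₁ f = ∫ (t-ν₀) f(t) dt`. Finally `H_i q̃ = P'`, i.e. `p = H_i q`, so the integrand of the double
integral is `(s-t)(p(s)q(t) - q(s)p(t))`; expanding `s - t = (s-ν₀) - (t-ν₀)` splits it into products
of single integrals, which sum to `2(M₁p M₀q - M₁q M₀p)`.
-/

open Real

lemma phiPDF_eq (x : ℝ) : phiPDF x = (√(2 * π))⁻¹ * exp (-(x ^ 2 / 2)) := by
  simp only [phiPDF, gaussianPDFReal, NNReal.coe_one, mul_one, sub_zero, neg_div]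

lemma phiPDF_pos (x : ℝ) : 0 < phiPDF x := gaussianPDFReal_pos 0 1 x one_ne_zero

lemma phiPDF_le (x : ℝ) : phiPDF x ≤ (√(2 * π))⁻¹ := by
  rw [phiPDF_eq]
  exact mul_le_of_le_one_right (by positivity) (exp_le_one_iff.2 (by nlinarith [sq_nonneg x]))

lemma abs_phiPDF_div_le (x b : ℝ) : |phiPDF x / b| ≤ (√(2 * π))⁻¹ / |b| := by
  rw [abs_div, abs_of_pos (phiPDF_pos x)]
  exact div_le_div_of_nonneg_right (phiPDF_le x) (abs_nonneg b)

lemma phiPDF_sub_le (x y : ℝ) : phiPDF (x - y) ≤ exp (y ^ 2 / 2) * phiPDF (x / 2) := by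
  rw [phiPDF_eq, phiPDF_eq, mul_left_comm, ← exp_add]
  gcongr
  nlinarith [sq_nonneg (3 * x - 4 * y), sq_nonneg y]

@[fun_prop]
lemma continuous_phiPDF : Continuous phiPDF := by
  simp only [funext phiPDF_eq]
  fun_prop

lemma hasDerivAt_phiPDF (x : ℝ) : HasDerivAt phiPDF (-x * phiPDF x) x := by
  have h := ((hasDerivAt_pow 2 x).div_const 2).fun_neg.exp.const_mul (√(2 * π))⁻¹
  rw [← funext phiPDF_eq] at h
  exact h.congr_deriv (by rw [phiPDF_eq]; ring)

lemma integrable_phiPDF : Integrable phiPDF := integrable_gaussianPDFReal 0 1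

lemma integrable_mul_phiPDF : Integrable (fun x => x * phiPDF x) := by
  refine ((integrable_mul_exp_neg_mul_sq (b := 1 / 2) (by norm_num)).const_mul (√(2 * π))⁻¹).congr
    (ae_of_all _ fun x => ?_)
  simp only [phiPDF_eq]
  ring_nf

lemma Phi_eq_integral (x : ℝ) : Phi x = ∫ t in Set.Iic x, phiPDF t := by
  rw [Phi, gaussianReal_apply_eq_integral 0 one_ne_zero]
  exact ENNReal.toReal_ofReal (setIntegral_nonneg measurableSet_Iic fun t _ => (phiPDF_pos t).le)

lemma Phi_pos (x : ℝ) : 0 < Phi x := by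
  rw [Phi_eq_integral, setIntegral_pos_iff_support_of_nonneg_ae
    (ae_of_all _ fun t => (phiPDF_pos t).le) integrable_phiPDF.integrableOn,
    Function.support_eq_univ fun t => (phiPDF_pos t).ne', Set.univ_inter]
  simp [Real.volume_Iic]

lemma Phi_le_one (x : ℝ) : Phi x ≤ 1 :=
  ENNReal.toReal_le_of_le_ofReal zero_le_one (by simpa using prob_le_one)

lemma hasDerivAt_Phi (x : ℝ) : HasDerivAt Phi (phiPDF x) x := by
  have hPhi : ∀ y, Phi y = Phi 0 + ∫ t in (0 : ℝ)..y, phiPDF t := fun y => by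
    rw [Phi_eq_integral, Phi_eq_integral, ← intervalIntegral.integral_Iic_sub_Iic
      integrable_phiPDF.integrableOn integrable_phiPDF.integrableOn]
    ring
  rw [funext hPhi]
  exact (intervalIntegral.integral_hasDerivAt_right integrable_phiPDF.intervalIntegrable
    continuous_phiPDF.stronglyMeasurable.stronglyMeasurableAtFilter
    continuous_phiPDF.continuousAt).const_add _

@[fun_prop]
lemma continuous_Phi : Continuous Phi :=
  continuous_iff_continuousAt.2 fun x => (hasDerivAt_Phi x).continuousAt

lemma hasDerivAt_Phi_div (b c t : ℝ) :
    HasDerivAt (fun t => Phi ((t - c) / b)) (phiPDF ((t - c) / b) / b) t := by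
  have h := (hasDerivAt_Phi ((t - c) / b)).comp t (((hasDerivAt_id' t).sub_const c).div_const b)
  rwa [mul_one_div] at h

section CdfProd

variable {ι : Type*} (s : Finset ι) (b : ℝ) (ν : ι → ℝ)

noncomputable def cdfProd (t : ℝ) : ℝ := ∏ j ∈ s, Phi ((t - ν j) / b)

lemma cdfProd_pos (t : ℝ) : 0 < cdfProd s b ν t :=
  Finset.prod_pos fun _ _ => Phi_pos _

lemma abs_cdfProd_le_one (t : ℝ) : |cdfProd s b ν t| ≤ 1 := by
  rw [abs_of_pos (cdfProd_pos s b ν t)]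
  exact Finset.prod_le_one (fun _ _ => (Phi_pos _).le) fun _ _ => Phi_le_one _

@[fun_prop]
lemma continuous_cdfProd : Continuous (cdfProd s b ν) :=
  continuous_finsetProd s fun _ _ => continuous_Phi.comp (by fun_prop)

variable [DecidableEq ι]

noncomputable def cdfProdDeriv (t : ℝ) : ℝ :=
  ∑ j ∈ s, cdfProd (s.erase j) b ν t * (phiPDF ((t - ν j) / b) / b)

lemma hasDerivAt_cdfProd (t : ℝ) : HasDerivAt (cdfProd s b ν) (cdfProdDeriv s b ν t) t := by
  have h := HasDerivAt.fun_finsetProd (u := s) fun j _ => hasDerivAt_Phi_div b (ν j) t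
  simp only [smul_eq_mul] at h
  exact h

@[fun_prop]
lemma continuous_cdfProdDeriv : Continuous (cdfProdDeriv s b ν) :=
  continuous_finsetSum s fun _ _ =>
    (continuous_cdfProd _ b ν).mul ((continuous_phiPDF.comp (by fun_prop)).div_const b)

lemma abs_cdfProdDeriv_le (t : ℝ) :
    |cdfProdDeriv s b ν t| ≤ s.card * ((√(2 * π))⁻¹ / |b|) := by
  refine (Finset.abs_sum_le_sum_abs _ _).trans ?_
  rw [← nsmul_eq_mul, ← Finset.sum_const]
  refine Finset.sum_le_sum fun j _ => ?_
  rw [abs_mul]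
  exact mul_le_of_le_one_left (abs_nonneg _) (abs_cdfProd_le_one _ b ν t) |>.trans
    (abs_phiPDF_div_le _ b)

lemma cdfProd_update {i : ι} (hi : i ∈ s) (v t : ℝ) :
    cdfProd s b (Function.update ν i v) t = Phi ((t - v) / b) * cdfProd (s.erase i) b ν t := by
  rw [cdfProd, ← Finset.mul_prod_erase s _ hi, Function.update_self]
  congr 1
  exact Finset.prod_congr rfl fun j hj => by rw [Function.update_of_ne (Finset.ne_of_mem_erase hj)]

end CdfProd

section GaussianKernel

variable {a : ℝ}

lemma integrable_phiPDF_div (ha : a ≠ 0) (v : ℝ) : Integrable (fun t => phiPDF ((t - v) / a)) :=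
  (integrable_phiPDF.comp_div ha).comp_sub_right v

lemma integrable_sub_mul_phiPDF_div (ha : a ≠ 0) (v : ℝ) :
    Integrable (fun t => (t - v) * phiPDF ((t - v) / a)) := by
  refine (((integrable_mul_phiPDF.comp_div ha).const_mul a).comp_sub_right v).congr
    (ae_of_all _ fun t => ?_)
  simp only
  field_simp

variable {g : ℝ → ℝ} {K : ℝ}

lemma integrable_phiPDF_div_mul (ha : a ≠ 0) (v : ℝ) (hg : AEStronglyMeasurable g)
    (hgK : ∀ t, |g t| ≤ K) : Integrable (fun t => phiPDF ((t - v) / a) * g t) :=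
  (integrable_phiPDF_div ha v).mul_bdd hg (ae_of_all _ hgK)

lemma integrable_sub_mul_phiPDF_div_mul (ha : a ≠ 0) (v : ℝ) (hg : AEStronglyMeasurable g)
    (hgK : ∀ t, |g t| ≤ K) : Integrable (fun t => (t - v) * (phiPDF ((t - v) / a) * g t)) := by
  simpa only [mul_assoc] using (integrable_sub_mul_phiPDF_div ha v).mul_bdd hg (ae_of_all _ hgK)

lemma hasDerivAt_phiPDF_sub_div (t v : ℝ) :
    HasDerivAt (fun v => phiPDF ((t - v) / a)) ((t - v) * phiPDF ((t - v) / a) / a ^ 2) v := by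
  have h := (hasDerivAt_phiPDF ((t - v) / a)).comp v (((hasDerivAt_id' v).const_sub t).div_const a)
  exact h.congr_deriv (by ring)

/-- Dominates `φ((t - v)/a)` by an integrable function of `t`, uniformly for `|v - v₀| ≤ a`. -/
lemma phiPDF_sub_div_le (ha : 0 < a) {t v v₀ : ℝ} (hv : |v - v₀| ≤ a) :
    phiPDF ((t - v) / a) ≤ exp (1 / 2) * phiPDF ((t - v₀) / (a * 2)) := by
  have h := phiPDF_sub_le ((t - v₀) / a) ((v - v₀) / a)
  rw [show (t - v₀) / a - (v - v₀) / a = (t - v) / a by ring, div_div] at h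
  refine h.trans (mul_le_mul_of_nonneg_right (exp_le_exp.2 ?_) (phiPDF_pos _).le)
  rw [div_pow, div_le_div_iff_of_pos_right two_pos, div_le_one (by positivity)]
  exact sq_le_sq' (abs_le.1 hv).1 (abs_le.1 hv).2

lemma hasDerivAt_integral_phiPDF_div_mul (ha : 0 < a) (hg : AEStronglyMeasurable g)
    (hgK : ∀ t, |g t| ≤ K) (v₀ : ℝ) :
    HasDerivAt (fun v => ∫ t, phiPDF ((t - v) / a) * g t)
      ((∫ t, (t - v₀) * (phiPDF ((t - v₀) / a) * g t)) / a ^ 2) v₀ := by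
  set bound : ℝ → ℝ := fun t =>
    exp (1 / 2) * K / a ^ 2 * (|t - v₀| * phiPDF ((t - v₀) / (a * 2)) + a * phiPDF ((t - v₀) / (a * 2)))
  have h2a : a * 2 ≠ 0 := by positivity
  have hbound_int : Integrable bound :=
    ((integrable_sub_mul_phiPDF_div h2a v₀).abs.add
      ((integrable_phiPDF_div h2a v₀).const_mul a)).const_mul (exp (1 / 2) * K / a ^ 2) |>.congr
      (ae_of_all _ fun t => by simp only [Pi.add_apply, abs_mul, abs_of_pos (phiPDF_pos _), bound])
  have hderiv_le : ∀ t, ∀ v ∈ Metric.ball v₀ a,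
      ‖(t - v) * (phiPDF ((t - v) / a) * g t) / a ^ 2‖ ≤ bound t := by
    intro t v hv
    have hv : |v - v₀| ≤ a := (Metric.mem_ball.1 hv).le
    have htv : |t - v| ≤ |t - v₀| + a := by linarith [abs_sub_le t v₀ v, abs_sub_comm v₀ v]
    rw [Real.norm_eq_abs, abs_div, abs_mul, abs_mul, abs_of_pos (phiPDF_pos _),
      abs_of_pos (by positivity : 0 < a ^ 2)]
    calc |t - v| * (phiPDF ((t - v) / a) * |g t|) / a ^ 2
        ≤ (|t - v₀| + a) * (exp (1 / 2) * phiPDF ((t - v₀) / (a * 2)) * K) / a ^ 2 := by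
          have := phiPDF_pos ((t - v) / a)
          have := phiPDF_pos ((t - v₀) / (a * 2))
          gcongr
          · exact phiPDF_sub_div_le ha hv
          · exact hgK t
      _ = bound t := by simp only [bound]; ring
  have h := hasDerivAt_integral_of_dominated_loc_of_deriv_le (Metric.ball_mem_nhds v₀ ha)
    (Eventually.of_forall fun v => (integrable_phiPDF_div_mul ha.ne' v hg hgK).aestronglyMeasurable)
    (integrable_phiPDF_div_mul ha.ne' v₀ hg hgK)
    ((integrable_sub_mul_phiPDF_div_mul ha.ne' v₀ hg hgK).div_const _).aestronglyMeasurable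
    (ae_of_all _ hderiv_le) hbound_int
    (ae_of_all _ fun t v _ => ((hasDerivAt_phiPDF_sub_div t v).mul_const (g t)).congr_deriv (by ring))
  simpa only [integral_div] using h.2

end GaussianKernel

lemma hasDerivAt_integral_mul_of_abs_deriv_le {α : Type*} [MeasurableSpace α] {μ : Measure α}
    {f : α → ℝ} {F F' : ℝ → α → ℝ} {C x₀ : ℝ} (hf : Integrable f μ)
    (hF_meas : ∀ x, AEStronglyMeasurable (F x) μ) (hfF : Integrable (fun t => f t * F x₀ t) μ)
    (hF'_meas : AEStronglyMeasurable (F' x₀) μ) (hF' : ∀ x t, HasDerivAt (F · t) (F' x t) x)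
    (hF'_le : ∀ x t, |F' x t| ≤ C) :
    HasDerivAt (fun x => ∫ t, f t * F x t ∂μ) (∫ t, f t * F' x₀ t ∂μ) x₀ :=
  (hasDerivAt_integral_of_dominated_loc_of_deriv_le (bound := fun t => |f t| * C) Filter.univ_mem
    (Eventually.of_forall fun x => hf.1.mul (hF_meas x)) hfF (hf.1.mul hF'_meas)
    (ae_of_all _ fun t x _ => by
      rw [Real.norm_eq_abs, abs_mul]
      exact mul_le_mul_of_nonneg_left (hF'_le x t) (abs_nonneg _))
    (hf.abs.mul_const C) (ae_of_all _ fun t x _ => (hF' x t).const_mul (f t))).2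

private lemma integral_add_sub_sub_mul {α : Type*} [MeasurableSpace α] {μ : Measure α}
    {f₁ f₂ f₃ f₄ : α → ℝ} (h₁ : Integrable f₁ μ) (h₂ : Integrable f₂ μ) (h₃ : Integrable f₃ μ)
    (h₄ : Integrable f₄ μ) (c₁ c₂ c₃ c₄ : ℝ) :
    ∫ x, (c₁ * f₁ x - c₂ * f₂ x - c₃ * f₃ x + c₄ * f₄ x) ∂μ =
      c₁ * ∫ x, f₁ x ∂μ - c₂ * ∫ x, f₂ x ∂μ - c₃ * ∫ x, f₃ x ∂μ + c₄ * ∫ x, f₄ x ∂μ := by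
  rw [integral_add (by fun_prop) (by fun_prop), integral_sub (by fun_prop) (by fun_prop),
    integral_sub (by fun_prop) (by fun_prop)]
  simp only [integral_const_mul]

/-- Writing `s - t = (s - c) - (t - c)` makes the integrand a sum of products of a function of `s`
and a function of `t`, so no Fubini argument is needed. -/
theorem integral_integral_sub_mul_sub {μ : Measure ℝ} {p q : ℝ → ℝ} (c : ℝ)
    (hp : Integrable p μ) (hq : Integrable q μ) (hp₁ : Integrable (fun s => (s - c) * p s) μ)
    (hq₁ : Integrable (fun s => (s - c) * q s) μ) :
    ∫ s, ∫ t, (s - t) * (p s * q t - q s * p t) ∂μ ∂μ =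
      2 * ((∫ s, (s - c) * p s ∂μ) * (∫ s, q s ∂μ) - (∫ s, (s - c) * q s ∂μ) * ∫ s, p s ∂μ) := by
  have inner : ∀ s, ∫ t, (s - t) * (p s * q t - q s * p t) ∂μ =
      (∫ t, q t ∂μ) * ((s - c) * p s) - (∫ t, (t - c) * q t ∂μ) * p s
        - (∫ t, p t ∂μ) * ((s - c) * q s) + (∫ t, (t - c) * p t ∂μ) * q s := fun s => by
    rw [integral_congr_ae (ae_of_all _ fun t => (by ring : (s - t) * (p s * q t - q s * p t) =
        (s - c) * p s * q t - p s * ((t - c) * q t) - (s - c) * q s * p t + q s * ((t - c) * p t))),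
      integral_add_sub_sub_mul hq hq₁ hp hp₁]
    ring
  simp_rw [inner]
  rw [integral_add_sub_sub_mul hp₁ hp hq₁ hq]
  ring

lemma abs_phiPDF_mul_cdfProd_le {ι : Type*} (x : ℝ) (s : Finset ι) (b : ℝ) (ν : ι → ℝ) (t : ℝ) :
    |phiPDF x * cdfProd s b ν t| ≤ (√(2 * π))⁻¹ := by
  rw [abs_mul, abs_of_pos (phiPDF_pos x)]
  exact mul_le_of_le_one_right (phiPDF_pos x).le (abs_cdfProd_le_one s b ν t) |>.trans (phiPDF_le x)

section PartialDerivatives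

variable {k : ℕ} {ρ : ℝ}

lemma Gint_eq (ρ v : ℝ) (ν : Fin k → ℝ) :
    Gint ρ v ν = 1 / √ρ * ∫ t, phiPDF ((t - v) / √ρ) * cdfProd Finset.univ (√(1 - ρ)) ν t :=
  rfl

lemma dG0_eq (hρ : 0 < ρ) (ν : Fin k → ℝ) (v : ℝ) :
    dG0 ρ ν v = 1 / √ρ * ∫ t, phiPDF ((t - v) / √ρ) * cdfProdDeriv Finset.univ (√(1 - ρ)) ν t := by
  have ha : √ρ ≠ 0 := (sqrt_pos.2 hρ).ne'
  have shift : ∀ (g : ℝ → ℝ) w,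
      ∫ t, phiPDF ((t - w) / √ρ) * g t = ∫ u, phiPDF (u / √ρ) * g (u + w) := fun g w => by
    simpa using (integral_add_right_eq_self (fun t => phiPDF ((t - w) / √ρ) * g t) w).symm
  have h := hasDerivAt_integral_mul_of_abs_deriv_le (x₀ := v)
    (F := fun w u => cdfProd Finset.univ (√(1 - ρ)) ν (u + w))
    (integrable_phiPDF.comp_div ha) (fun w => by fun_prop)
    ((integrable_phiPDF.comp_div ha).mul_bdd (by fun_prop)
      (ae_of_all _ fun u => abs_cdfProd_le_one _ _ ν _)) (by fun_prop)
    (fun w u => (hasDerivAt_cdfProd _ _ ν (u + w)).comp_const_add u w)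
    (fun w u => abs_cdfProdDeriv_le _ _ ν (u + w))
  rw [dG0, funext fun w => (Gint_eq ρ w ν).trans (by rw [shift]), (h.const_mul _).deriv, shift]

lemma dGi_eq (hρ : 0 < ρ) (ν : Fin k → ℝ) (i : Fin k) (v : ℝ) :
    dGi ρ i ν v = -(1 / (√ρ * √(1 - ρ))) * ∫ t, phiPDF ((t - v) / √ρ) *
      (phiPDF ((t - ν i) / √(1 - ρ)) * cdfProd (Finset.univ.erase i) (√(1 - ρ)) ν t) := by
  set b := √(1 - ρ)
  set Q := cdfProd (Finset.univ.erase i) b ν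
  have ha : √ρ ≠ 0 := (sqrt_pos.2 hρ).ne'
  have hG : ∀ w, Gint ρ v (Function.update ν i w) =
      1 / √ρ * ∫ t, phiPDF ((t - v) / √ρ) * (Phi ((t - w) / b) * Q t) := fun w => by
    simp_rw [Gint_eq, cdfProd_update _ _ _ (Finset.mem_univ i)]
    rfl
  have hΦ : ∀ w t, HasDerivAt (fun w => Phi ((t - w) / b) * Q t) (-(phiPDF ((t - w) / b) / b) * Q t) w :=
    fun w t => ((hasDerivAt_Phi _).comp w (((hasDerivAt_id' w).const_sub t).div_const b)
      |>.mul_const (Q t)).congr_deriv (by ring)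
  have h := hasDerivAt_integral_mul_of_abs_deriv_le (x₀ := ν i)
    (integrable_phiPDF_div ha v) (fun w => by fun_prop)
    (integrable_phiPDF_div_mul ha v (by fun_prop) fun t => by
      rw [abs_mul, abs_of_pos (Phi_pos _)]
      exact mul_le_one₀ (Phi_le_one _) (abs_nonneg _) (abs_cdfProd_le_one _ b ν t))
    (by fun_prop) hΦ fun w t => by
      rw [abs_mul, abs_neg]
      exact mul_le_of_le_one_right (abs_nonneg _) (abs_cdfProd_le_one _ b ν t)
        |>.trans (abs_phiPDF_div_le _ b)
  rw [dGi, funext hG, (h.const_mul _).deriv, ← integral_const_mul, ← integral_const_mul]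
  congr 1 with t
  field_simp

end PartialDerivatives

lemma Hfun_mul {k : ℕ} (ρ : ℝ) (ν : Fin k → ℝ) (i : Fin k) (t : ℝ) :
    Hfun ρ i ν t * (phiPDF ((t - ν i) / √(1 - ρ)) * cdfProd (Finset.univ.erase i) (√(1 - ρ)) ν t) =
      cdfProdDeriv Finset.univ (√(1 - ρ)) ν t := by
  have hP := cdfProd_update Finset.univ (√(1 - ρ)) ν (Finset.mem_univ i) (ν i) t
  rw [Function.update_eq_self] at hP
  change Phi _ / phiPDF _ * deriv (cdfProd Finset.univ _ ν) t / cdfProd Finset.univ _ ν t * _ = _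
  rw [(hasDerivAt_cdfProd _ _ ν t).deriv, hP]
  have := (phiPDF_pos ((t - ν i) / √(1 - ρ))).ne'
  have := (Phi_pos ((t - ν i) / √(1 - ρ))).ne'
  have := (cdfProd_pos (Finset.univ.erase i) (√(1 - ρ)) ν t).ne'
  field_simp

/-- By `Hfun_mul` the integrand is `(s - t) * (p s * q t - q s * p t)`, where `p` and `q` are the
two functions integrated on the right-hand side. -/
lemma integral_integral_Hfun_eq {k : ℕ} {ρ : ℝ} (hρ : 0 < ρ) (ν0 : ℝ) (ν : Fin k → ℝ) (i : Fin k) :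
    ∫ s : ℝ, ∫ t : ℝ,
      phiPDF ((s - ν0) / √ρ) * phiPDF ((t - ν0) / √ρ) *
      phiPDF ((s - ν i) / √(1 - ρ)) * phiPDF ((t - ν i) / √(1 - ρ)) *
      (∏ j ∈ Finset.univ.erase i, Phi ((s - ν j) / √(1 - ρ))) *
      (∏ j ∈ Finset.univ.erase i, Phi ((t - ν j) / √(1 - ρ))) *
      ((s - t) * (Hfun ρ i ν s - Hfun ρ i ν t)) =
    2 * ((∫ t, (t - ν0) * (phiPDF ((t - ν0) / √ρ) * cdfProdDeriv Finset.univ (√(1 - ρ)) ν t)) *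
        (∫ t, phiPDF ((t - ν0) / √ρ) *
          (phiPDF ((t - ν i) / √(1 - ρ)) * cdfProd (Finset.univ.erase i) (√(1 - ρ)) ν t)) -
      (∫ t, (t - ν0) * (phiPDF ((t - ν0) / √ρ) *
          (phiPDF ((t - ν i) / √(1 - ρ)) * cdfProd (Finset.univ.erase i) (√(1 - ρ)) ν t))) *
        ∫ t, phiPDF ((t - ν0) / √ρ) * cdfProdDeriv Finset.univ (√(1 - ρ)) ν t) := by
  have ha : √ρ ≠ 0 := (sqrt_pos.2 hρ).ne'
  have hP' := abs_cdfProdDeriv_le Finset.univ (√(1 - ρ)) ν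
  have hq : ∀ t, |phiPDF ((t - ν i) / √(1 - ρ)) * cdfProd (Finset.univ.erase i) (√(1 - ρ)) ν t| ≤
      (√(2 * π))⁻¹ := fun t => abs_phiPDF_mul_cdfProd_le _ _ _ ν t
  rw [← integral_integral_sub_mul_sub ν0 (integrable_phiPDF_div_mul ha ν0 (by fun_prop) hP')
    (integrable_phiPDF_div_mul ha ν0 (by fun_prop) hq)
    (integrable_sub_mul_phiPDF_div_mul ha ν0 (by fun_prop) hP')
    (integrable_sub_mul_phiPDF_div_mul ha ν0 (by fun_prop) hq)]
  refine integral_congr_ae (ae_of_all _ fun s => integral_congr_ae (ae_of_all _ fun t => ?_))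
  linear_combination (norm := skip) (s - t) * phiPDF ((s - ν0) / √ρ) * phiPDF ((t - ν0) / √ρ) *
      (phiPDF ((t - ν i) / √(1 - ρ)) * cdfProd (Finset.univ.erase i) (√(1 - ρ)) ν t) *
      Hfun_mul ρ ν i s -
    (s - t) * phiPDF ((s - ν0) / √ρ) * phiPDF ((t - ν0) / √ρ) *
      (phiPDF ((s - ν i) / √(1 - ρ)) * cdfProd (Finset.univ.erase i) (√(1 - ρ)) ν s) *
      Hfun_mul ρ ν i t
  simp only [cdfProd]
  ring

theorem stmt16_general (k : ℕ) (ρ : ℝ) (hρ : ρ ∈ Set.Ioo (0:ℝ) 1)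
    (ν0 : ℝ) (ν : Fin k → ℝ) (i : Fin k) :
    Delta ρ i ν ν0 =
      (1 / (2 * ρ^2 * Real.sqrt (1-ρ))) *
        ∫ s : ℝ, ∫ t : ℝ,
          phiPDF ((s - ν0) / Real.sqrt ρ) * phiPDF ((t - ν0) / Real.sqrt ρ) *
          phiPDF ((s - ν i) / Real.sqrt (1-ρ)) * phiPDF ((t - ν i) / Real.sqrt (1-ρ)) *
          (∏ j ∈ Finset.univ.erase i, Phi ((s - ν j) / Real.sqrt (1-ρ))) *
          (∏ j ∈ Finset.univ.erase i, Phi ((t - ν j) / Real.sqrt (1-ρ))) *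
          ((s - t) * (Hfun ρ i ν s - Hfun ρ i ν t)) := by
  have ha : 0 < √ρ := sqrt_pos.2 hρ.1
  have hP' := abs_cdfProdDeriv_le Finset.univ (√(1 - ρ)) ν
  have hq : ∀ t, |phiPDF ((t - ν i) / √(1 - ρ)) * cdfProd (Finset.univ.erase i) (√(1 - ρ)) ν t| ≤
      (√(2 * π))⁻¹ := fun t => abs_phiPDF_mul_cdfProd_le _ _ _ ν t
  have hdG0 := (hasDerivAt_integral_phiPDF_div_mul ha (by fun_prop) hP' ν0).const_mul (1 / √ρ)
  have hdGi := (hasDerivAt_integral_phiPDF_div_mul ha (by fun_prop) hq ν0).const_mul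
    (-(1 / (√ρ * √(1 - ρ))))
  rw [Delta, funext (dG0_eq hρ.1 ν), funext (dGi_eq hρ.1 ν i), hdG0.deriv, hdGi.deriv,
    integral_integral_Hfun_eq hρ.1, show ρ ^ 2 = √ρ ^ 4 by rw [pow_mul' _ 2 2, sq_sqrt hρ.1.le]]
  ring

/-- Double-integral representation of
`∂²G/∂ν₀∂ν_i · ∂G/∂ν₀ - ∂²G/∂ν₀² · ∂G/∂ν_i`. -/
theorem stmt16 (k : ℕ) (hk : 1 ≤ k) (ρ : ℝ) (hρ : ρ ∈ Set.Ioo (0:ℝ) 1)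
    (ν0 : ℝ) (ν : Fin k → ℝ) (i : Fin k) :
    Delta ρ i ν ν0 =
      (1 / (2 * ρ^2 * Real.sqrt (1-ρ))) *
        ∫ s : ℝ, ∫ t : ℝ,
          phiPDF ((s - ν0) / Real.sqrt ρ) * phiPDF ((t - ν0) / Real.sqrt ρ) *
          phiPDF ((s - ν i) / Real.sqrt (1-ρ)) * phiPDF ((t - ν i) / Real.sqrt (1-ρ)) *
          (∏ j ∈ Finset.univ.erase i, Phi ((s - ν j) / Real.sqrt (1-ρ))) *
          (∏ j ∈ Finset.univ.erase i, Phi ((t - ν j) / Real.sqrt (1-ρ))) *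
          ((s - t) * (Hfun ρ i ν s - Hfun ρ i ν t)) :=
  stmt16_general k ρ hρ ν0 ν i
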